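/- arXiv:2406.18163 — 2 statements merged into one kernel-verified Lean document; each statement's English description precedes it below -/
import Mathlib

section
/- Let N ≥ 3 and let P : Fin N → ℝ² (indices cyclic mod N) be such that for every i the three points P (i−1), P i, P (i+1) are affinely independent. Set ℓ i := dist(P i, P (i+1)), θ i := ∠(P (i−1), P i, P (i+1)) (the unsigned Euclidean angle at P i), Per := ∑ i, ℓ i, and let A := (1/2) · ∑ i, ((P i).1 · (P (i+1)).2 − (P (i+1)).1 · (P i).2) be the shoelace quantity, and assume A > 0. If for every i one has ψ(θ i) = ψ(θ (i+1)) and (1/ℓ i) · (ψ(θ i) + ψ(θ (i+1))) = Per/(2·A), then ℓ i = ℓ j and θ i = θ j for all i, j. -/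
/-!
The tilting condition makes `ψ(θ i)` constant around the polygon. Every angle lies in `(0, π)`
by affine independence, and there `ψ(θ) = cot(θ/2)` is positive and injective: so all angles are
equal, and the sliding condition then gives every side the same value `1/ℓ i = Per / (4 A ψ)`.
-/

open EuclideanGeometry

noncomputable def psi (θ : ℝ) : ℝ := 1 / Real.sin θ + Real.cos θ / Real.sin θ

open Real Set

-- No hypothesis needed: where `sin θ = 0` both sides vanish by the convention `x / 0 = 0`.
theorem psi_eq_cot_half (θ : ℝ) : psi θ = cot (θ / 2) := by
  obtain ⟨x, rfl⟩ : ∃ x, θ = 2 * x := ⟨θ / 2, by ring⟩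
  have hcos : 1 + cos (2 * x) = 2 * cos x ^ 2 := by rw [cos_sq]; ring
  rw [psi, ← add_div, hcos, sin_two_mul, mul_div_cancel_left₀ _ two_ne_zero, cot_eq_cos_div_sin]
  rcases eq_or_ne (cos x) 0 with hc | hc
  · simp [hc]
  · rw [show 2 * cos x ^ 2 / (2 * sin x * cos x) = 2 * cos x * cos x / (2 * cos x * sin x) by ring]
    exact mul_div_mul_left _ _ (mul_ne_zero two_ne_zero hc)

theorem psi_pos {θ : ℝ} (h₀ : 0 < θ) (hπ : θ < π) : 0 < psi θ := by
  rw [psi_eq_cot_half, ← tan_inv_eq_cot]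
  exact inv_pos.2 (tan_pos_of_pos_of_lt_pi_div_two (by linarith) (by linarith))

theorem psi_injOn : InjOn psi (Ioo 0 π) := by
  intro a ⟨ha₀, haπ⟩ b ⟨hb₀, hbπ⟩ hab
  rw [psi_eq_cot_half, psi_eq_cot_half, ← tan_inv_eq_cot, ← tan_inv_eq_cot, inv_inj] at hab
  have := injOn_tan ⟨by linarith, by linarith⟩ ⟨by linarith, by linarith⟩ hab
  linarith

open Fin.NatCast in
theorem Fin.apply_eq_apply_zero_of_apply_add_one {N : ℕ} [NeZero N] {α : Type*} {f : Fin N → α}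
    (hf : ∀ i, f (i + 1) = f i) (i : Fin N) : f i = f 0 := by
  rw [← Fin.cast_val_eq_self i]
  induction (i : ℕ) with
  | zero => simp
  | succ n ih => rw [Nat.cast_add_one, hf, ih]

theorem EuclideanGeometry.angle_mem_Ioo_of_affineIndependent
    {V P : Type*} [NormedAddCommGroup V] [InnerProductSpace ℝ V] [MetricSpace P]
    [NormedAddTorsor V P] {p₁ p₂ p₃ : P} (h : AffineIndependent ℝ ![p₁, p₂, p₃]) :
    ∠ p₁ p₂ p₃ ∈ Ioo 0 π := by
  rw [affineIndependent_iff_not_collinear_set] at h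
  exact ⟨angle_pos_of_not_collinear h, angle_lt_pi_of_not_collinear h⟩

theorem alexandrov_polygon_sliding_tilting_general
    (N : ℕ) [NeZero N]
    (P : Fin N → EuclideanSpace ℝ (Fin 2))
    (hindep : ∀ i : Fin N, AffineIndependent ℝ ![P (i - 1), P i, P (i + 1)])
    (θ ℓ : Fin N → ℝ)
    (hθ : ∀ i : Fin N, θ i = ∠ (P (i - 1)) (P i) (P (i + 1)))
    (Per : ℝ)
    (A : ℝ)
    (htilt : ∀ i : Fin N, psi (θ i) = psi (θ (i + 1)))
    (hslide : ∀ i : Fin N, (1 / ℓ i) * (psi (θ i) + psi (θ (i + 1))) = Per / (2 * A)) :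
    (∀ i j, ℓ i = ℓ j) ∧ (∀ i j, θ i = θ j) := by
  have hθ_mem (i : Fin N) : θ i ∈ Ioo 0 π := hθ i ▸ angle_mem_Ioo_of_affineIndependent (hindep i)
  have hψ (i : Fin N) : psi (θ i) = psi (θ 0) :=
    Fin.apply_eq_apply_zero_of_apply_add_one (f := psi ∘ θ) (fun i => (htilt i).symm) i
  have hψ_pos : 0 < psi (θ 0) := psi_pos (hθ_mem 0).1 (hθ_mem 0).2
  have hℓ_inv (i : Fin N) : (ℓ i)⁻¹ = Per / (2 * A) / (2 * psi (θ 0)) := by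
    rw [← hslide i, hψ i, hψ (i + 1)]
    field_simp
    ring
  exact ⟨fun i j => inv_inj.1 ((hℓ_inv i).trans (hℓ_inv j).symm),
    fun i j => psi_injOn (hθ_mem i) (hθ_mem j) ((hψ i).trans (hψ j).symm)⟩

/-- Alexandrov's theorem for polygons (sliding & tilting stationarity conditions),
geometric form: a polygon whose side lengths `ℓ`, interior angles `θ`, perimeter
`Per` and shoelace area `A` satisfy the two stationarity conditions on every side
is equilateral and equiangular, i.e. regular. -/
theorem alexandrov_polygon_sliding_tilting
    (N : ℕ) (hN : 3 ≤ N) [NeZero N]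
    (P : Fin N → EuclideanSpace ℝ (Fin 2))
    (hindep : ∀ i : Fin N, AffineIndependent ℝ ![P (i - 1), P i, P (i + 1)])
    (θ ℓ : Fin N → ℝ)
    (hθ : ∀ i : Fin N, θ i = ∠ (P (i - 1)) (P i) (P (i + 1)))
    (hℓ : ∀ i : Fin N, ℓ i = dist (P i) (P (i + 1)))
    (Per : ℝ) (hPer : Per = ∑ i, ℓ i)
    (A : ℝ)
    (hA : A = (1 / 2) * ∑ i : Fin N, (P i 0 * P (i + 1) 1 - P (i + 1) 0 * P i 1))
    (hApos : 0 < A)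
    (htilt : ∀ i : Fin N, psi (θ i) = psi (θ (i + 1)))
    (hslide : ∀ i : Fin N, (1 / ℓ i) * (psi (θ i) + psi (θ (i + 1))) = Per / (2 * A)) :
    (∀ i j, ℓ i = ℓ j) ∧ (∀ i j, θ i = θ j) :=
  alexandrov_polygon_sliding_tilting_general N P hindep θ ℓ hθ Per A htilt hslide
end

section
/- Let A, B, C ∈ ℝ² be affinely independent points, and let u := (C − A)/‖C − A‖. Then the derivative at t = 0 of the function t ↦ dist(A, B + t·u) + dist(B + t·u, C) vanishes if and only if ∠(B, A, C) = ∠(B, C, A). -/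
/-!
Moving `B` with unit velocity `u`, the distance to a fixed point `P ≠ B` changes at rate
`⟪B - P, u⟫ / ‖B - P‖`, the cosine of the angle between `B - P` and `u`. With `u` pointing
from `A` to `C` this gives the derivative `cos ∠BAC - cos ∠BCA`, and the cosine is injective
on `[0, π]`.
-/

open EuclideanGeometry InnerProductGeometry RealInnerProductSpace Real

variable {F : Type*} [NormedAddCommGroup F] [InnerProductSpace ℝ F]

theorem HasDerivAt.norm {f : ℝ → F} {f' : F} {x : ℝ} (hf : HasDerivAt f f' x)
    (h0 : f x ≠ 0) : HasDerivAt (fun t => ‖f t‖) (⟪f x, f'⟫ / ‖f x‖) x := by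
  have hsq : ‖f x‖ ^ 2 ≠ 0 := pow_ne_zero 2 (norm_ne_zero_iff.mpr h0)
  convert hf.norm_sq.sqrt hsq using 1
  · simp only [sqrt_sq (norm_nonneg _)]
  · rw [sqrt_sq (norm_nonneg _)]
    field_simp

theorem hasDerivAt_dist_add_smul (P B u : F) (h : B ≠ P) :
    HasDerivAt (fun t : ℝ => dist (B + t • u) P) (⟪B - P, u⟫ / ‖B - P‖) 0 := by
  have hline : HasDerivAt (fun t : ℝ => B + t • u - P) u 0 := by
    simpa using (((hasDerivAt_id (0 : ℝ)).smul_const u).const_add B).sub_const P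
  simpa [dist_eq_norm] using hline.norm (by simpa [sub_eq_zero] using h)

theorem inner_normalize_div_norm_eq_cos_angle (x y : F) :
    ⟪x, ‖y‖⁻¹ • y⟫ / ‖x‖ = cos (angle x y) := by
  rw [cos_angle, real_inner_smul_right]
  ring

/-- Stationarity characterization for the vertex-moving perturbation: the
derivative at `t = 0` of the sum of the two adjacent side lengths vanishes iff
the two base angles over the diagonal `AC` are equal. -/
theorem vertex_moving_stationarity_iff
    (A B C : EuclideanSpace ℝ (Fin 2))
    (hindep : AffineIndependent ℝ ![A, B, C]) :
    deriv
      (fun t : ℝ =>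
        dist A (B + t • (‖C - A‖⁻¹ • (C - A))) +
          dist (B + t • (‖C - A‖⁻¹ • (C - A))) C) 0 = 0 ↔
      ∠ B A C = ∠ B C A := by
  have hBA : B ≠ A := hindep.injective.ne (by decide : (1 : Fin 3) ≠ 0)
  have hBC : B ≠ C := hindep.injective.ne (by decide : (1 : Fin 3) ≠ 2)
  have hdir : ‖C - A‖⁻¹ • (C - A) = -(‖A - C‖⁻¹ • (A - C)) := by
    rw [norm_sub_rev, ← smul_neg, neg_sub]
  have hderiv : HasDerivAt
      (fun t : ℝ => dist A (B + t • (‖C - A‖⁻¹ • (C - A))) +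
        dist (B + t • (‖C - A‖⁻¹ • (C - A))) C)
      (cos (∠ B A C) - cos (∠ B C A)) 0 := by
    have hA := hasDerivAt_dist_add_smul A B (‖C - A‖⁻¹ • (C - A)) hBA
    have hC := hasDerivAt_dist_add_smul C B (‖C - A‖⁻¹ • (C - A)) hBC
    rw [inner_normalize_div_norm_eq_cos_angle] at hA
    rw [hdir, inner_neg_right, neg_div, inner_normalize_div_norm_eq_cos_angle, ← hdir] at hC
    simp_rw [dist_comm A]
    exact hA.add hC
  rw [hderiv.deriv, sub_eq_zero]
  exact injOn_cos.eq_iff ⟨angle_nonneg _ _ _, angle_le_pi _ _ _⟩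
    ⟨angle_nonneg _ _ _, angle_le_pi _ _ _⟩
end
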